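/- Let (g_i)_{i≥1} be nonnegative integers with g_i = (θ/i) ρ^{−i} (1 + O((log i)^{−2})) for some θ > 0 and 0 < ρ < 1, and fix φ > 0. Choose ξ with φ ρ^{ξ/2} < 1. Then T(z) := ∑_{i≥ξ} g_i (log(1 + φ z^i) − φ z^i) defines an analytic function on the open disc |z| < ρ^{1/2}, and S(z) := (∏_{1≤i<ξ} ((1+φz^i) e^{−φ z^i})^{g_i}) e^{T(z)} is analytic on |z| < ρ^{1/2} with S(ρ) ≠ 0. -/

import Mathlib

/-!
The asymptotics of `g` give `g_i = O(ρ^{-i})`, and `log (1 + w) - w = O(‖w‖²)` for `‖w‖` bounded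
away from `1`. Hence on a disc `‖z‖ ≤ r` with `r < √ρ` the `i`-th term of `T` is `O((r² / ρ)^i)`,
the series converges normally and `T` is holomorphic on `‖z‖ < √ρ`. `S` is a finite product of
entire functions times `exp ∘ T`, and at `z = ρ` each factor `1 + φ ρ^i` is positive.
-/

open Filter Topology Asymptotics Complex Metric

theorem isBigO_inv_pow_of_isBigO_inv_log_sq {a : ℕ → ℝ} {θ ρ : ℝ} (hθ : θ ≠ 0) (hρ : ρ ≠ 0)
    (h : (fun i : ℕ => a i * i * ρ ^ i / θ - 1) =O[atTop] fun i : ℕ => ((Real.log i) ^ 2)⁻¹) :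
    a =O[atTop] fun i => ρ⁻¹ ^ i := by
  have hlog : Tendsto (fun i : ℕ => ((Real.log i) ^ 2)⁻¹) atTop (𝓝 0) :=
    ((tendsto_pow_atTop two_ne_zero).comp
      (Real.tendsto_log_atTop.comp tendsto_natCast_atTop_atTop)).inv_tendsto_atTop
  have hlim : Tendsto (fun i : ℕ => a i * i * ρ ^ i) atTop (𝓝 θ) := by
    simpa only [mul_one, mul_div_cancel₀ _ hθ] using
      (tendsto_sub_nhds_zero_iff.mp (h.trans_tendsto hlog)).const_mul θ
  have hbdd : (fun i : ℕ => a i * i * ρ ^ i * (i : ℝ)⁻¹) =O[atTop] fun _ => (1 : ℝ) :=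
    (hlim.mul (tendsto_inv_atTop_zero.comp tendsto_natCast_atTop_atTop)).isBigO_one ℝ
  refine ((hbdd.mul (isBigO_refl (fun i : ℕ => ρ⁻¹ ^ i) atTop)).congr' ?_ ?_)
  · filter_upwards [eventually_ne_atTop 0] with i hi
    have hi' : (i : ℝ) ≠ 0 := Nat.cast_ne_zero.mpr hi
    rw [inv_pow]
    field_simp
  · simp

section LogTail

variable {φ z : ℂ} {r : ℝ} {ξ k : ℕ}

theorem norm_mul_pow_le_of_norm_le (hz : ‖z‖ ≤ r) (hr : r ≤ 1) (hk : ξ ≤ k) :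
    ‖φ * z ^ k‖ ≤ ‖φ‖ * r ^ ξ := by
  have hr0 : 0 ≤ r := (norm_nonneg z).trans hz
  rw [norm_mul, norm_pow]
  gcongr
  calc ‖z‖ ^ k ≤ r ^ k := by gcongr
    _ ≤ r ^ ξ := pow_le_pow_of_le_one hr0 hr hk

theorem norm_log_one_add_mul_pow_sub_le (hz : ‖z‖ ≤ r) (hr : r ≤ 1) (hk : ξ ≤ k)
    (hφ : ‖φ‖ * r ^ ξ < 1) :
    ‖log (1 + φ * z ^ k) - φ * z ^ k‖ ≤ ‖φ‖ ^ 2 * (1 - ‖φ‖ * r ^ ξ)⁻¹ / 2 * (r ^ 2) ^ k := by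
  have hw : ‖φ * z ^ k‖ ≤ ‖φ‖ * r ^ ξ := norm_mul_pow_le_of_norm_le hz hr hk
  have hwk : ‖φ * z ^ k‖ ≤ ‖φ‖ * r ^ k := by
    rw [norm_mul, norm_pow]; gcongr
  calc ‖log (1 + φ * z ^ k) - φ * z ^ k‖
      ≤ ‖φ * z ^ k‖ ^ 2 * (1 - ‖φ * z ^ k‖)⁻¹ / 2 :=
        norm_log_one_add_sub_self_le (hw.trans_lt hφ)
    _ ≤ (‖φ‖ * r ^ k) ^ 2 * (1 - ‖φ‖ * r ^ ξ)⁻¹ / 2 := by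
        have : 0 < 1 - ‖φ‖ * r ^ ξ := sub_pos.mpr hφ
        have : 0 < 1 - ‖φ * z ^ k‖ := by linarith
        gcongr
    _ = ‖φ‖ ^ 2 * (1 - ‖φ‖ * r ^ ξ)⁻¹ / 2 * (r ^ 2) ^ k := by ring

theorem differentiableAt_log_one_add_mul_pow_sub (h : ‖φ * z ^ k‖ < 1) :
    DifferentiableAt ℂ (fun z => log (1 + φ * z ^ k) - φ * z ^ k) z := by
  have hlog : DifferentiableAt ℂ log (1 + φ * z ^ k) :=
    differentiableAt_log (mem_slitPlane_of_norm_lt_one h)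
  exact (hlog.comp (f := fun z => 1 + φ * z ^ k) z (by fun_prop)).sub (by fun_prop)

theorem summable_norm_mul_pow_of_isBigO {c : ℕ → ℂ} {ρ s : ℝ}
    (hc : c =O[atTop] fun k => ρ⁻¹ ^ k) (hs0 : 0 ≤ s) (hs : s < ρ) :
    Summable fun k => ‖c k‖ * s ^ k := by
  have hρ : 0 < ρ := hs0.trans_lt hs
  refine summable_of_isBigO_nat (summable_geometric_of_lt_one (by positivity)
    ((div_lt_one hρ).mpr hs)) ?_
  refine (hc.norm_left.mul (isBigO_refl (fun k => s ^ k) atTop)).congr_right fun k => ?_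
  rw [← mul_pow, div_eq_inv_mul]

variable {c : ℕ → ℂ} {ρ : ℝ}

theorem differentiableOn_tsum_log_one_add_mul_pow_sub (hc : c =O[atTop] fun k => ρ⁻¹ ^ k)
    (hrρ : r ^ 2 < ρ) (hr1 : r ≤ 1) (hφ : ‖φ‖ * r ^ ξ < 1) :
    DifferentiableOn ℂ
      (fun z => ∑' i, c (i + ξ) * (log (1 + φ * z ^ (i + ξ)) - φ * z ^ (i + ξ))) (ball 0 r) := by
  set K := ‖φ‖ ^ 2 * (1 - ‖φ‖ * r ^ ξ)⁻¹ / 2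
  have hsum : Summable fun i => ‖c (i + ξ)‖ * (r ^ 2) ^ (i + ξ) * K :=
    ((summable_norm_mul_pow_of_isBigO hc (by positivity) hrρ).comp_injective
      (add_left_injective ξ)).mul_right K
  refine differentiableOn_tsum_of_summable_norm hsum (fun i z hz => ?_) isOpen_ball
    (fun i z hz => ?_)
  · have hz' : ‖z‖ ≤ r := (mem_ball_zero_iff.mp hz).le
    exact ((differentiableAt_log_one_add_mul_pow_sub
      ((norm_mul_pow_le_of_norm_le hz' hr1 (Nat.le_add_left ξ i)).trans_lt hφ)).const_mul
        _).differentiableWithinAt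
  · have hz' : ‖z‖ ≤ r := (mem_ball_zero_iff.mp hz).le
    rw [norm_mul, mul_assoc]
    gcongr
    exact (norm_log_one_add_mul_pow_sub_le hz' hr1 (Nat.le_add_left ξ i) hφ).trans_eq (mul_comm _ _)

theorem analyticOnNhd_tsum_log_one_add_mul_pow_sub (hc : c =O[atTop] fun k => ρ⁻¹ ^ k)
    (hρ1 : ρ ≤ 1) (hφ : ‖φ‖ * √ρ ^ ξ < 1) :
    AnalyticOnNhd ℂ
      (fun z => ∑' i, c (i + ξ) * (log (1 + φ * z ^ (i + ξ)) - φ * z ^ (i + ξ)))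
      (ball 0 √ρ) := by
  refine DifferentiableOn.analyticOnNhd (differentiableOn_of_locally_differentiableOn
    fun x hx => ?_) isOpen_ball
  have hx : ‖x‖ < √ρ := mem_ball_zero_iff.mp hx
  obtain ⟨r, hxr, hrρ⟩ := exists_between hx
  have hr0 : 0 ≤ r := (norm_nonneg x).trans hxr.le
  refine ⟨ball 0 r, isOpen_ball, mem_ball_zero_iff.mpr hxr, ?_⟩
  refine (differentiableOn_tsum_log_one_add_mul_pow_sub hc ((Real.lt_sqrt hr0).mp hrρ)
    (hrρ.le.trans (Real.sqrt_le_one.mpr hρ1)) ((by gcongr : ‖φ‖ * r ^ ξ ≤ _).trans_lt hφ)).mono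
    Set.inter_subset_right

end LogTail

theorem selection_continuation_general (g : ℕ → ℕ) (θ ρ φ : ℝ)
    (hθ : 0 < θ) (hρ : 0 < ρ) (hρ1 : ρ < 1) (hφ : 0 < φ)
    (hasymp : (fun i : ℕ => (g i : ℝ) * i * ρ ^ i / θ - 1)
      =O[atTop] fun i : ℕ => ((Real.log i) ^ 2)⁻¹)
    (ξ : ℕ) (hξρ : φ * ρ ^ ((ξ : ℝ) / 2) < 1) :
    AnalyticOn ℂ
      (fun z => ∑' i : ℕ,
        (g (i + ξ) : ℂ) * (Complex.log (1 + (φ : ℂ) * z ^ (i + ξ)) - (φ : ℂ) * z ^ (i + ξ)))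
      (Metric.ball (0 : ℂ) (Real.sqrt ρ)) ∧
    AnalyticOn ℂ
      (fun z =>
        (∏ i ∈ Finset.Ico 1 ξ,
            ((1 + (φ : ℂ) * z ^ i) * Complex.exp (-((φ : ℂ) * z ^ i))) ^ g i) *
          Complex.exp (∑' i : ℕ,
            (g (i + ξ) : ℂ) *
              (Complex.log (1 + (φ : ℂ) * z ^ (i + ξ)) - (φ : ℂ) * z ^ (i + ξ))))
      (Metric.ball (0 : ℂ) (Real.sqrt ρ)) ∧
    (∏ i ∈ Finset.Ico 1 ξ,
        ((1 + (φ : ℂ) * (ρ : ℂ) ^ i) * Complex.exp (-((φ : ℂ) * (ρ : ℂ) ^ i))) ^ g i) *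
      Complex.exp (∑' i : ℕ,
        (g (i + ξ) : ℂ) *
          (Complex.log (1 + (φ : ℂ) * (ρ : ℂ) ^ (i + ξ)) - (φ : ℂ) * (ρ : ℂ) ^ (i + ξ)))
      ≠ 0 := by
  have hcoef : (fun i => (g i : ℂ)) =O[atTop] fun i => ρ⁻¹ ^ i := by
    refine IsBigO.of_norm_left ?_
    simpa using (isBigO_inv_pow_of_isBigO_inv_log_sq hθ.ne' hρ.ne' hasymp).norm_left
  have hφξ : ‖(φ : ℂ)‖ * √ρ ^ ξ < 1 := by
    rwa [norm_real, Real.norm_of_nonneg hφ.le, Real.sqrt_eq_rpow, ← Real.rpow_natCast,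
      ← Real.rpow_mul hρ.le, one_div_mul_eq_div]
  have hT := analyticOnNhd_tsum_log_one_add_mul_pow_sub hcoef hρ1.le hφξ
  refine ⟨hT.analyticOn, AnalyticOnNhd.analyticOn ?_, ?_⟩
  · exact (DifferentiableOn.analyticOnNhd (by fun_prop) isOpen_ball).mul hT.cexp
  · refine mul_ne_zero (Finset.prod_ne_zero_iff.mpr fun i _ => pow_ne_zero _
      (mul_ne_zero ?_ (exp_ne_zero _))) (exp_ne_zero _)
    exact_mod_cast (by positivity : (0 : ℝ) < 1 + φ * ρ ^ i).ne'

/-- Analytic continuation lemma for tilted selection classes: if nonnegative integers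
`g_i` satisfy `g_i = (θ/i) ρ^{-i}(1 + O((log i)^{-2}))` with `θ > 0`, `0 < ρ < 1`, and
`φ > 0`, and `ξ ≥ 1` is chosen with `φ ρ^{ξ/2} < 1`, then
`T(z) = ∑_{i ≥ ξ} g_i (log(1+φ z^i) − φ z^i)` is analytic on `|z| < ρ^{1/2}`, and
`S(z) = (∏_{1 ≤ i < ξ} ((1+φ z^i) e^{−φ z^i})^{g_i}) e^{T(z)}` is analytic on
`|z| < ρ^{1/2}` with `S(ρ) ≠ 0`. -/
theorem selection_continuation (g : ℕ → ℕ) (θ ρ φ : ℝ)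
    (hθ : 0 < θ) (hρ : 0 < ρ) (hρ1 : ρ < 1) (hφ : 0 < φ)
    (hasymp : (fun i : ℕ => (g i : ℝ) * i * ρ ^ i / θ - 1)
      =O[atTop] fun i : ℕ => ((Real.log i) ^ 2)⁻¹)
    (ξ : ℕ) (hξ : 1 ≤ ξ) (hξρ : φ * ρ ^ ((ξ : ℝ) / 2) < 1) :
    AnalyticOn ℂ
      (fun z => ∑' i : ℕ,
        (g (i + ξ) : ℂ) * (Complex.log (1 + (φ : ℂ) * z ^ (i + ξ)) - (φ : ℂ) * z ^ (i + ξ)))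
      (Metric.ball (0 : ℂ) (Real.sqrt ρ)) ∧
    AnalyticOn ℂ
      (fun z =>
        (∏ i ∈ Finset.Ico 1 ξ,
            ((1 + (φ : ℂ) * z ^ i) * Complex.exp (-((φ : ℂ) * z ^ i))) ^ g i) *
          Complex.exp (∑' i : ℕ,
            (g (i + ξ) : ℂ) *
              (Complex.log (1 + (φ : ℂ) * z ^ (i + ξ)) - (φ : ℂ) * z ^ (i + ξ))))
      (Metric.ball (0 : ℂ) (Real.sqrt ρ)) ∧
    (∏ i ∈ Finset.Ico 1 ξ,
        ((1 + (φ : ℂ) * (ρ : ℂ) ^ i) * Complex.exp (-((φ : ℂ) * (ρ : ℂ) ^ i))) ^ g i) *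
      Complex.exp (∑' i : ℕ,
        (g (i + ξ) : ℂ) *
          (Complex.log (1 + (φ : ℂ) * (ρ : ℂ) ^ (i + ξ)) - (φ : ℂ) * (ρ : ℂ) ^ (i + ξ)))
      ≠ 0 :=
  selection_continuation_general g θ ρ φ hθ hρ hρ1 hφ hasymp ξ hξρ
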